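/- arXiv:1806.08262 — 2 statements merged into one kernel-verified Lean document; each statement's English description precedes it below -/
import Mathlib

section
/- There is a universal constant C > 0 with the following property. Let d be an even positive integer, let δ ≤ d/4, let a and L be positive integers with d = aL and 1 ≤ a < δ, let m_1,…,m_K ∈ ℂ^d be masks whose nonzero entries all lie in positions {1,…,δ} with ‖m‖_∞ := max_{1≤k≤K} ‖m_k‖_∞ > 0, and let 0 < p ≤ q. Suppose A : ℝ^{K×L} → ℂ^d satisfies d₁(A(y), A(y′)) ≤ C_A‖y − y′‖₂ for all y, y′ ∈ ℝ^{K×L} and A(Y(x)) ∼ x for every x ∈ C_{p,q}. Then C_A ≥ C·q·d·√a / (p·√K·‖m‖_∞²·δ^{5/2}). -/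
open scoped BigOperators

noncomputable section

/-- Map an integer to `Fin d` by reduction mod `d` (requires `0 < d`). -/
def intToFin (d : ℕ) (hd : 0 < d) (z : ℤ) : Fin d :=
  ⟨(z % (d : ℤ)).toNat, by
    have h1 : 0 ≤ z % (d : ℤ) := Int.emod_nonneg z (by exact_mod_cast hd.ne')
    have h2 : z % (d : ℤ) < (d : ℤ) := Int.emod_lt_of_pos z (by exact_mod_cast hd)
    omega⟩

/-- Circular shift: `(S_ℓ x)(n) = x(((n + ℓ - 1) mod d) + 1)` in 1-based indexing. -/
def shift {d : ℕ} (ℓ : ℤ) (x : Fin d → ℂ) : Fin d → ℂ :=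
  fun i => x (intToFin d i.pos ((i : ℤ) + ℓ))

/-- `⟨u,v⟩ = ∑ u(n) conj(v(n))`. -/
def innerC {d : ℕ} (u v : Fin d → ℂ) : ℂ := ∑ n, u n * (starRingEnd ℂ) (v n)

/-- `x ∼ x'` iff `x = e^{iθ} x'` for some real `θ`. -/
def phaseEquiv {d : ℕ} (x x' : Fin d → ℂ) : Prop :=
  ∃ θ : ℝ, x = fun n => Complex.exp (θ * Complex.I) * x' n

/-- Euclidean norm on `ℂ^d`. -/
def norm2 {d : ℕ} (x : Fin d → ℂ) : ℝ := Real.sqrt (∑ n, ‖x n‖ ^ 2)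

/-- `D₂(x,x') = min_θ ‖x - e^{iθ} x'‖₂`. -/
def D2 {d : ℕ} (x x' : Fin d → ℂ) : ℝ :=
  ⨅ θ : ℝ, norm2 (fun n => x n - Complex.exp (θ * Complex.I) * x' n)

/-- `C_{p,q} = {x : p ≤ |x(n)| ≤ q for all n}`. -/
def Cpq (d : ℕ) (p q : ℝ) : Set (Fin d → ℂ) :=
  {x | ∀ n, p ≤ ‖x n‖ ∧ ‖x n‖ ≤ q}

/-- `‖m‖_∞ = max_k ‖m_k‖_∞`. -/
def maskSup {d K : ℕ} (m : Fin K → Fin d → ℂ) : ℝ :=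
  ⨆ k, ⨆ n, ‖m k n‖

/-- The measurement map `Z(x)_{k,ℓ} = |⟨S_{ℓa} m_k, x⟩|`, `1 ≤ k ≤ K`, `1 ≤ ℓ ≤ L`. -/
def Zmap {d K : ℕ} (L : ℕ) (m : Fin K → Fin d → ℂ) (a : ℕ) (x : Fin d → ℂ) :
    EuclideanSpace ℝ (Fin K × Fin L) :=
  WithLp.toLp 2 fun kl => ‖innerC (shift ((((kl.2 : ℕ) + 1) * a : ℕ) : ℤ) (m kl.1)) x‖

/-- The measurement map `Y(x)_{k,ℓ} = |⟨S_{ℓa} m_k, x⟩|²`. -/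
def Ymap {d K : ℕ} (L : ℕ) (m : Fin K → Fin d → ℂ) (a : ℕ) (x : Fin d → ℂ) :
    EuclideanSpace ℝ (Fin K × Fin L) :=
  WithLp.toLp 2 fun kl => ‖innerC (shift ((((kl.2 : ℕ) + 1) * a : ℕ) : ℤ) (m kl.1)) x‖ ^ 2

/-- The vectors `x^{±}` (sign `ε = ±1`): `q` on positions `1,…,d/2-δ`, `p` on
`d/2-δ+1,…,d/2`, `±q` on `d/2+1,…,d-δ`, and `p` on `d-δ+1,…,d`. -/
def xpm (d δ : ℕ) (p q ε : ℝ) : Fin d → ℂ :=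
  fun i => if (i : ℕ) < d / 2 - δ then (q : ℂ)
    else if (i : ℕ) < d / 2 then (p : ℂ)
    else if (i : ℕ) < d - δ then ((ε * q : ℝ) : ℂ)
    else (p : ℂ)

/-- The difference of outer products `x x^* - x' x'^*`. -/
def outerDiff {d : ℕ} (x x' : Fin d → ℂ) : Matrix (Fin d) (Fin d) ℂ :=
  Matrix.of fun i j => x i * star (x j) - x' i * star (x' j)

lemma outerDiff_isHermitian {d : ℕ} (x x' : Fin d → ℂ) :
    (outerDiff x x').IsHermitian := by
  unfold Matrix.IsHermitian
  ext i j
  simp [outerDiff, Matrix.conjTranspose_apply, star_sub, star_mul, star_star, mul_comm]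

/-- `d₁(x,x') = ‖x x^* - x' x'^*‖₁`, the sum of the singular values (for a Hermitian
matrix, the sum of the absolute values of its eigenvalues). -/
def d1 {d : ℕ} (x x' : Fin d → ℂ) : ℝ :=
  ∑ i, |(outerDiff_isHermitian x x').eigenvalues i|

/-!
The test vectors `x⁺ = xpm d δ p q 1` and `x⁻ = xpm d δ p q (-1)` lie in `C_{p,q}` and differ only
by a sign on the block `[d/2, d - δ)`. A mask supported on `δ` consecutive positions sees a window
of `δ` coordinates, so `Y(x⁺)` and `Y(x⁻)` agree in every entry whose window does not straddle one
of the two ends of that block; only `4δ/a` of the shifts `ℓa` straddle, and there `x⁺ + x⁻` is of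
size `p`, so the entry changes by at most `4pqδ²‖m‖∞²`. Hence
`‖Y(x⁺) - Y(x⁻)‖ ≤ 8pq √(Kδ/a) δ² ‖m‖∞²`. On the other hand, testing `x⁺x⁺* - x⁻x⁻*` against
`x⁺` gives `d₁(x⁺, x⁻) ≥ q²d/2`, and `A` preserves `d₁` between these two points because it
recovers both up to a phase.
-/

open Matrix in
theorem Matrix.IsHermitian.abs_re_star_dotProduct_mulVec_le {n : Type*} [Fintype n]
    [DecidableEq n] {M : Matrix n n ℂ} (hM : M.IsHermitian) (v : n → ℂ) :
    |(star v ⬝ᵥ (M *ᵥ v)).re| ≤ (∑ i, |hM.eigenvalues i|) * ∑ i, Complex.normSq (v i) := by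
  set U : Matrix n n ℂ := (hM.eigenvectorUnitary : Matrix n n ℂ)
  set w : n → ℂ := star U *ᵥ v
  have hw : star w = star v ᵥ* U := by simp [w, star_mulVec, ← star_eq_conjTranspose]
  have sq_eq : ∀ u : n → ℂ, star u ⬝ᵥ u = ((∑ i, Complex.normSq (u i) : ℝ) : ℂ) := by
    intro u
    push_cast
    exact Finset.sum_congr rfl fun i _ => by simp [Complex.normSq_eq_conj_mul_self]
  have quad : star v ⬝ᵥ (M *ᵥ v) = ∑ i, (hM.eigenvalues i : ℂ) * Complex.normSq (w i) := by
    conv_lhs => rw [hM.spectral_theorem, Unitary.conjStarAlgAut_apply]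
    rw [← mulVec_mulVec, ← mulVec_mulVec, dotProduct_mulVec, ← hw, dotProduct]
    refine Finset.sum_congr rfl fun i _ => ?_
    simp only [Pi.star_apply, RCLike.star_def, Complex.coe_algebraMap, mulVec_diagonal,
      Function.comp_apply, Complex.normSq_eq_conj_mul_self]
    ring
  have norm_w : ∑ i, Complex.normSq (w i) = ∑ i, Complex.normSq (v i) := by
    have : star w ⬝ᵥ w = star v ⬝ᵥ v := by
      rw [hw, ← dotProduct_mulVec, mulVec_mulVec,
        (mem_unitaryGroup_iff).mp hM.eigenvectorUnitary.2, one_mulVec]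
    exact_mod_cast (sq_eq w).symm.trans (this.trans (sq_eq v))
  have re_quad : (star v ⬝ᵥ (M *ᵥ v)).re = ∑ i, hM.eigenvalues i * Complex.normSq (w i) := by
    rw [quad, Complex.re_sum]
    exact Finset.sum_congr rfl fun i _ => by rw [← Complex.ofReal_mul, Complex.ofReal_re]
  rw [re_quad, Finset.sum_mul]
  refine (Finset.abs_sum_le_sum_abs _ _).trans (Finset.sum_le_sum fun i _ => ?_)
  rw [abs_mul, abs_of_nonneg (Complex.normSq_nonneg _), ← norm_w]
  gcongr
  exact Finset.single_le_sum (fun j _ => Complex.normSq_nonneg (w j)) (Finset.mem_univ i)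

open Matrix in
theorem star_dotProduct_outerDiff_mulVec {d : ℕ} (x x' v : Fin d → ℂ) :
    star v ⬝ᵥ (outerDiff x x' *ᵥ v)
      = ((Complex.normSq (innerC v x) - Complex.normSq (innerC v x') : ℝ) : ℂ) := by
  have rank_one : ∀ y : Fin d → ℂ,
      star v ⬝ᵥ (of (fun i j => y i * star (y j)) *ᵥ v) = Complex.normSq (innerC v y) := by
    intro y
    rw [Complex.normSq_eq_conj_mul_self, innerC, map_sum]
    simp only [dotProduct, mulVec, of_apply, Finset.mul_sum, Finset.sum_mul]
    rw [Finset.sum_comm]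
    refine Finset.sum_congr rfl fun i _ => Finset.sum_congr rfl fun j _ => ?_
    simp only [Pi.star_apply, Complex.star_def, map_mul, Complex.conj_conj]
    ring
  have : outerDiff x x' = of (fun i j => x i * star (x j)) - of (fun i j => x' i * star (x' j)) :=
    rfl
  rw [this, sub_mulVec, dotProduct_sub, rank_one, rank_one]
  push_cast
  ring

theorem normSq_innerC_sub_normSq_innerC_le_d1 {d : ℕ} (x x' v : Fin d → ℂ) :
    Complex.normSq (innerC v x) - Complex.normSq (innerC v x')
      ≤ d1 x x' * ∑ i, Complex.normSq (v i) := by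
  have h := (outerDiff_isHermitian x x').abs_re_star_dotProduct_mulVec_le v
  rw [star_dotProduct_outerDiff_mulVec, Complex.ofReal_re] at h
  exact (le_abs_self _).trans h

theorem outerDiff_phase {d : ℕ} (θ θ' : ℝ) (x x' : Fin d → ℂ) :
    outerDiff (fun n => Complex.exp (θ * Complex.I) * x n)
      (fun n => Complex.exp (θ' * Complex.I) * x' n) = outerDiff x x' := by
  have unimodular :
      ∀ φ : ℝ, Complex.exp (φ * Complex.I) * star (Complex.exp (φ * Complex.I)) = 1 := by
    intro φ
    rw [Complex.star_def, Complex.mul_conj, Complex.normSq_eq_norm_sq,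
      Complex.norm_exp_ofReal_mul_I]
    norm_num
  ext i j
  simp only [outerDiff, Matrix.of_apply, star_mul']
  linear_combination (x i * star (x j)) * unimodular θ - (x' i * star (x' j)) * unimodular θ'

theorem d1_eq_of_phaseEquiv {d : ℕ} {x x' y y' : Fin d → ℂ} (hy : phaseEquiv y x)
    (hy' : phaseEquiv y' x') : d1 y y' = d1 x x' := by
  obtain ⟨θ, rfl⟩ := hy
  obtain ⟨θ', rfl⟩ := hy'
  unfold d1
  simp only [outerDiff_phase]

theorem intToFin_val {d : ℕ} (hd : 0 < d) (z : ℤ) :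
    ((intToFin d hd z : ℕ) : ℤ) = z % d :=
  Int.toNat_of_nonneg (Int.emod_nonneg z (by exact_mod_cast hd.ne'))

theorem intToFin_add {d : ℕ} (hd : 0 < d) (i : Fin d) (z : ℤ) :
    intToFin d hd (i + z) = i + intToFin d hd z := by
  ext
  rw [Fin.val_add, ← Int.natCast_inj, Int.natCast_emod, Nat.cast_add, intToFin_val,
    intToFin_val, Int.add_emod_emod]

theorem intToFin_natCast_val {d : ℕ} (hd : 0 < d) (n : ℕ) :
    (intToFin d hd n : ℕ) = n % d := by
  rw [← Int.natCast_inj, intToFin_val, Int.natCast_emod]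

theorem shift_apply {d : ℕ} [NeZero d] (s : ℤ) (x : Fin d → ℂ) (i : Fin d) :
    shift s x i = x (i + intToFin d (NeZero.pos d) s) := by
  rw [shift, intToFin_add]

theorem sum_norm_shift {d : ℕ} [NeZero d] (s : ℤ) (x : Fin d → ℂ) :
    ∑ i, ‖shift s x i‖ = ∑ i, ‖x i‖ := by
  simp only [shift_apply]
  exact Equiv.sum_comp (Equiv.addRight (intToFin d (NeZero.pos d) s)) (fun i => ‖x i‖)

theorem innerC_add_right {d : ℕ} (w x y : Fin d → ℂ) :
    innerC w (x + y) = innerC w x + innerC w y := by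
  simp only [innerC, Pi.add_apply, map_add, mul_add, Finset.sum_add_distrib]

theorem innerC_sub_right {d : ℕ} (w x y : Fin d → ℂ) :
    innerC w (x - y) = innerC w x - innerC w y := by
  simp only [innerC, Pi.sub_apply, map_sub, mul_sub, Finset.sum_sub_distrib]

theorem innerC_neg_right {d : ℕ} (w x : Fin d → ℂ) : innerC w (-x) = -innerC w x := by
  simp only [innerC, Pi.neg_apply, map_neg, mul_neg, Finset.sum_neg_distrib]

theorem innerC_congr_right {d : ℕ} {w x y : Fin d → ℂ} (h : ∀ i, w i ≠ 0 → x i = y i) :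
    innerC w x = innerC w y := by
  refine Finset.sum_congr rfl fun i _ => ?_
  by_cases hi : w i = 0
  · simp [hi]
  · rw [h i hi]

theorem norm_innerC_le {d : ℕ} {w x : Fin d → ℂ} {B : ℝ} (h : ∀ i, w i ≠ 0 → ‖x i‖ ≤ B) :
    ‖innerC w x‖ ≤ (∑ i, ‖w i‖) * B := by
  rw [Finset.sum_mul]
  refine (norm_sum_le _ _).trans (Finset.sum_le_sum fun i _ => ?_)
  rw [norm_mul, Complex.norm_conj]
  by_cases hi : w i = 0
  · simp [hi]
  · exact mul_le_mul_of_nonneg_left (h i hi) (norm_nonneg _)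

theorem sum_norm_le_of_support_lt {d δ : ℕ} {w : Fin d → ℂ} {M : ℝ}
    (hw : ∀ j, w j ≠ 0 → (j : ℕ) < δ) (hM : ∀ j, ‖w j‖ ≤ M) (hM0 : 0 ≤ M) :
    ∑ j, ‖w j‖ ≤ δ * M := by
  classical
  rw [← Finset.sum_filter_of_ne fun j _ hj => hw j (norm_ne_zero_iff.mp hj)]
  calc ∑ j ∈ Finset.univ.filter (fun j : Fin d => (j : ℕ) < δ), ‖w j‖
      ≤ (Finset.univ.filter (fun j : Fin d => (j : ℕ) < δ)).card • M :=
        Finset.sum_le_card_nsmul _ _ _ fun j _ => hM j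
    _ ≤ δ * M := by
      rw [Fin.card_filter_val_lt, nsmul_eq_mul]
      gcongr
      exact_mod_cast min_le_right _ _

theorem abs_sq_norm_sub_sq_norm_le (u v : ℂ) : |‖u‖ ^ 2 - ‖v‖ ^ 2| ≤ ‖u - v‖ * ‖u + v‖ := by
  have h : ‖u‖ ^ 2 - ‖v‖ ^ 2 = ((u - v) * (starRingEnd ℂ) (u + v)).re := by
    simp only [Complex.sq_norm, Complex.normSq_apply, Complex.mul_re, Complex.sub_re,
      Complex.sub_im, Complex.conj_re, Complex.conj_im, Complex.add_re, Complex.add_im]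
    ring
  rw [h, ← Complex.norm_conj (u + v), ← norm_mul]
  exact Complex.abs_re_le_norm _

section TestVectors

variable {d δ : ℕ} {p q : ℝ}

theorem xpm_mem_Cpq (hp : 0 ≤ p) (hpq : p ≤ q) {ε : ℝ} (hε : |ε| = 1) :
    xpm d δ p q ε ∈ Cpq d p q := by
  intro i
  have hq : 0 ≤ q := hp.trans hpq
  unfold xpm
  split_ifs <;> simp [abs_of_nonneg hp, abs_of_nonneg hq, hε, hpq]

theorem xpm_one_eq_xpm_neg_one {i : Fin d} (hi : (i : ℕ) < d / 2 ∨ d - δ ≤ i) :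
    xpm d δ p q 1 i = xpm d δ p q (-1) i := by
  unfold xpm
  split_ifs <;> first | rfl | omega

theorem xpm_one_eq_neg_xpm_neg_one {i : Fin d} (hi : d / 2 ≤ (i : ℕ) ∧ (i : ℕ) < d - δ) :
    xpm d δ p q 1 i = -xpm d δ p q (-1) i := by
  unfold xpm
  split_ifs <;> first | omega | push_cast; ring

theorem norm_xpm_one_sub_xpm_neg_one_le (hp : 0 ≤ p) (hpq : p ≤ q) (i : Fin d) :
    ‖xpm d δ p q 1 i - xpm d δ p q (-1) i‖ ≤ 2 * q := by
  unfold xpm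
  split_ifs <;>
    simp only [← Complex.ofReal_sub, Complex.norm_real, Real.norm_eq_abs, abs_le] <;>
    constructor <;> linarith

theorem norm_xpm_one_add_xpm_neg_one_le (hp : 0 ≤ p) {i : Fin d} (hi : d / 2 - δ ≤ (i : ℕ)) :
    ‖xpm d δ p q 1 i + xpm d δ p q (-1) i‖ ≤ 2 * p := by
  unfold xpm
  split_ifs <;> first | omega |
    (simp only [← Complex.ofReal_add, Complex.norm_real, Real.norm_eq_abs, abs_le]
     constructor <;> linarith)

end TestVectors

/-- The window `{i | (i + c) mod d < δ}` seen by a mask supported on `[0, δ)` after a shift by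
`c` straddles one of the two boundaries `d/2` and `d - δ` of the region where `x⁺ = -x⁻`. -/
abbrev StraddlesFlip (d δ c : ℕ) : Prop := (δ < c ∧ c < 2 * δ) ∨ (d / 2 < c ∧ c < d / 2 + δ)

theorem window_subset_of_not_straddlesFlip {d δ : ℕ} (hd : Even d) (hδd : 4 * δ ≤ d) {c : Fin d}
    (hc : ¬ StraddlesFlip d δ c) :
    (∀ i : Fin d, ((i + c : Fin d) : ℕ) < δ → (i : ℕ) < d / 2 ∨ d - δ ≤ i) ∨
      (∀ i : Fin d, ((i + c : Fin d) : ℕ) < δ → d / 2 ≤ (i : ℕ) ∧ (i : ℕ) < d - δ) := by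
  have := c.isLt
  have := Nat.even_iff.mp hd
  unfold StraddlesFlip at hc
  by_cases hflip : 2 * δ ≤ c ∧ (c : ℕ) ≤ d / 2 <;> [right; left] <;>
  · intro i hic
    have := i.isLt
    rw [Fin.val_add_eq_ite] at hic
    split_ifs at hic <;> omega

theorem window_subset_of_straddlesFlip {d δ : ℕ} {c : Fin d}
    (hc : StraddlesFlip d δ c) (i : Fin d) (hic : ((i + c : Fin d) : ℕ) < δ) :
    d / 2 - δ ≤ (i : ℕ) := by
  have := c.isLt
  have := i.isLt
  rw [Fin.val_add_eq_ite] at hic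
  split_ifs at hic <;> omega

section ShiftedMask

variable {d δ : ℕ} [NeZero d] {w : Fin d → ℂ}

theorem val_add_intToFin_lt_of_shift_ne_zero (hw : ∀ j, w j ≠ 0 → (j : ℕ) < δ) {s : ℤ}
    {i : Fin d} (hi : shift s w i ≠ 0) : ((i + intToFin d (NeZero.pos d) s : Fin d) : ℕ) < δ :=
  hw _ (by rwa [shift_apply] at hi)

theorem norm_innerC_shift_xpm_eq (hd : Even d) (hδd : 4 * δ ≤ d)
    (hw : ∀ j, w j ≠ 0 → (j : ℕ) < δ) (p q : ℝ) {s : ℤ}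
    (hs : ¬ StraddlesFlip d δ (intToFin d (NeZero.pos d) s)) :
    ‖innerC (shift s w) (xpm d δ p q 1)‖ = ‖innerC (shift s w) (xpm d δ p q (-1))‖ := by
  rcases window_subset_of_not_straddlesFlip hd hδd hs with hagree | hflip
  · rw [innerC_congr_right fun i hi =>
      xpm_one_eq_xpm_neg_one (hagree i (val_add_intToFin_lt_of_shift_ne_zero hw hi))]
  · rw [innerC_congr_right (y := -xpm d δ p q (-1)) fun i hi =>
      xpm_one_eq_neg_xpm_neg_one (hflip i (val_add_intToFin_lt_of_shift_ne_zero hw hi)),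
      innerC_neg_right, norm_neg]

theorem abs_sq_norm_innerC_shift_xpm_sub_le {p q M : ℝ} (hw : ∀ j, w j ≠ 0 → (j : ℕ) < δ)
    (hM : ∀ j, ‖w j‖ ≤ M) (hM0 : 0 ≤ M) (hp : 0 ≤ p) (hpq : p ≤ q) {s : ℤ}
    (hs : StraddlesFlip d δ (intToFin d (NeZero.pos d) s)) :
    |‖innerC (shift s w) (xpm d δ p q 1)‖ ^ 2 - ‖innerC (shift s w) (xpm d δ p q (-1))‖ ^ 2|
      ≤ 4 * p * q * δ ^ 2 * M ^ 2 := by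
  have hmass : ∑ i, ‖shift s w i‖ ≤ δ * M :=
    (sum_norm_shift s w).trans_le (sum_norm_le_of_support_lt hw hM hM0)
  have hq : 0 ≤ q := hp.trans hpq
  calc _ ≤ ‖innerC (shift s w) (xpm d δ p q 1 - xpm d δ p q (-1))‖
          * ‖innerC (shift s w) (xpm d δ p q 1 + xpm d δ p q (-1))‖ := by
        rw [innerC_sub_right, innerC_add_right]
        exact abs_sq_norm_sub_sq_norm_le _ _
    _ ≤ (δ * M * (2 * q)) * (δ * M * (2 * p)) := by
        gcongr
        · exact (norm_innerC_le fun i _ => norm_xpm_one_sub_xpm_neg_one_le hp hpq i).trans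
            (by gcongr)
        · refine (norm_innerC_le fun i hi => norm_xpm_one_add_xpm_neg_one_le hp ?_).trans
            (by gcongr)
          exact window_subset_of_straddlesFlip hs i (val_add_intToFin_lt_of_shift_ne_zero hw hi)
    _ = 4 * p * q * δ ^ 2 * M ^ 2 := by ring

end ShiftedMask

open Finset in
theorem card_filter_mul_mem_Ioo_mul_lt {a : ℕ} (ha : 0 < a) (c δ : ℕ) (s : Finset ℕ) :
    #{n ∈ s | c < a * n ∧ a * n < c + δ} * a < δ + a := by
  have hsub : {n ∈ s | c < a * n ∧ a * n < c + δ} ⊆ Ioc (c / a) ((c + δ - 1) / a) := by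
    intro n hn
    rw [mem_filter] at hn
    rw [mem_Ioc, Nat.div_lt_iff_lt_mul ha, Nat.le_div_iff_mul_le ha]
    constructor <;> linarith [hn.2.1, hn.2.2, Nat.le_sub_one_of_lt hn.2.2]
  calc #{n ∈ s | c < a * n ∧ a * n < c + δ} * a
      ≤ ((c + δ - 1) / a - c / a) * a := by
        gcongr
        exact (card_le_card hsub).trans (Nat.card_Ioc _ _).le
    _ < δ + a := by
      have := Nat.div_mul_le_self (c + δ - 1) a
      have := Nat.lt_div_mul_add (a := c) ha
      rw [Nat.sub_mul]
      omega

open Finset in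
theorem card_filter_straddlesFlip_mul_le {d δ a L : ℕ} (ha : 0 < a) (haδ : a < δ)
    (hdaL : d = a * L) :
    #{ℓ : Fin L | StraddlesFlip d δ (((ℓ + 1) * a) % d)} * a ≤ 4 * δ := by
  have hres : ∀ ℓ : Fin L, ((ℓ + 1) * a) % d = a * ((ℓ + 1) % L) := fun ℓ => by
    rw [hdaL, mul_comm _ a, Nat.mul_mod_mul_left]
  have hinj : #{ℓ : Fin L | StraddlesFlip d δ (((ℓ + 1) * a) % d)}
      ≤ #{n ∈ range L | StraddlesFlip d δ (a * n)} := by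
    refine card_le_card_of_injOn (fun ℓ => ((ℓ : ℕ) + 1) % L) (fun ℓ hℓ => ?_) ?_
    · simp only [mem_coe, mem_filter, mem_univ, true_and, mem_range, hres] at hℓ ⊢
      exact ⟨Nat.mod_lt _ ℓ.pos, hℓ⟩
    · intro ℓ _ ℓ' _ h
      exact Fin.ext (by simpa [Nat.ModEq, Nat.mod_eq_of_lt ℓ.2, Nat.mod_eq_of_lt ℓ'.2] using
        Nat.ModEq.add_right_cancel' 1 h)
  have hsplit : #{n ∈ range L | StraddlesFlip d δ (a * n)}
      ≤ #{n ∈ range L | δ < a * n ∧ a * n < δ + δ}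
        + #{n ∈ range L | d / 2 < a * n ∧ a * n < d / 2 + δ} := by
    refine (card_le_card fun n hn => ?_).trans (card_union_le _ _)
    simp only [mem_union, mem_filter, mem_range, StraddlesFlip] at hn ⊢
    omega
  have h1 := card_filter_mul_mem_Ioo_mul_lt ha δ δ (range L)
  have h2 := card_filter_mul_mem_Ioo_mul_lt ha (d / 2) δ (range L)
  have := Nat.mul_le_mul_right a (hinj.trans hsplit)
  rw [add_mul] at this
  omega

open Finset in
theorem sum_Ico_eq_card_nsmul {M : Type*} [AddCommMonoid M] {f : ℕ → M} {a b : ℕ} {c : M}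
    (h : ∀ i, a ≤ i → i < b → f i = c) : ∑ i ∈ Ico a b, f i = (b - a) • c := by
  rw [sum_congr rfl fun i hi => h i (mem_Ico.1 hi).1 (mem_Ico.1 hi).2, sum_const, Nat.card_Ico]

theorem innerC_self {d : ℕ} (x : Fin d → ℂ) :
    innerC x x = ((∑ i, Complex.normSq (x i) : ℝ) : ℂ) := by
  push_cast
  exact Finset.sum_congr rfl fun i _ => Complex.mul_conj (x i)

open Finset in
theorem innerC_xpm {d δ : ℕ} (hd : Even d) (hδd : 4 * δ ≤ d) (p q ε ε' : ℝ) :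
    innerC (xpm d δ p q ε) (xpm d δ p q ε')
      = (((d / 2 - δ : ℕ) * (1 + ε * ε') * q ^ 2 + 2 * δ * p ^ 2 : ℝ) : ℂ) := by
  have := Nat.even_iff.mp hd
  set f : ℝ → ℕ → ℂ := fun ε n => if n < d / 2 - δ then (q : ℂ) else if n < d / 2 then (p : ℂ)
    else if n < d - δ then ((ε * q : ℝ) : ℂ) else (p : ℂ)
  have hf : ∀ ε, xpm d δ p q ε = fun i : Fin d => f ε i := fun _ => rfl
  rw [innerC, hf, hf, Fin.sum_univ_eq_sum_range (fun n => f ε n * starRingEnd ℂ (f ε' n)),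
    range_eq_Ico, ← sum_Ico_consecutive _ (Nat.zero_le (d / 2 - δ)) (by omega : d / 2 - δ ≤ d),
    ← sum_Ico_consecutive _ (by omega : d / 2 - δ ≤ d / 2) (by omega : d / 2 ≤ d),
    ← sum_Ico_consecutive _ (by omega : d / 2 ≤ d - δ) (by omega : d - δ ≤ d),
    sum_Ico_eq_card_nsmul (c := q * starRingEnd ℂ q) fun i _ hi => by simp only [f, if_pos hi],
    sum_Ico_eq_card_nsmul (c := p * starRingEnd ℂ p) fun i hi hi' => by
      simp only [f, if_neg (show ¬ i < d / 2 - δ by omega), if_pos hi'],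
    sum_Ico_eq_card_nsmul (c := ((ε * q : ℝ) : ℂ) * starRingEnd ℂ ((ε' * q : ℝ) : ℂ))
      fun i hi hi' => by
        simp only [f, if_neg (show ¬ i < d / 2 - δ by omega), if_neg (show ¬ i < d / 2 by omega),
          if_pos hi'],
    sum_Ico_eq_card_nsmul (c := p * starRingEnd ℂ p) fun i hi _ => by
      simp only [f, if_neg (show ¬ i < d / 2 - δ by omega), if_neg (show ¬ i < d / 2 by omega),
        if_neg (show ¬ i < d - δ by omega)],
    show d / 2 - (d / 2 - δ) = δ by omega, show d - δ - d / 2 = d / 2 - δ by omega,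
    show d - (d - δ) = δ by omega]
  simp only [nsmul_eq_mul, Complex.conj_ofReal, Nat.sub_zero]
  push_cast
  ring

theorem sq_mul_div_two_le_d1_xpm {d δ : ℕ} (hd : Even d) (hd0 : 0 < d) (hδd : 4 * δ ≤ d) {p q : ℝ}
    (hp : 0 < p) (hpq : p ≤ q) :
    q ^ 2 * d / 2 ≤ d1 (xpm d δ p q 1) (xpm d δ p q (-1)) := by
  obtain ⟨X, hX⟩ : ∃ X : ℝ, X = (d / 2 - δ : ℕ) * q ^ 2 := ⟨_, rfl⟩
  obtain ⟨P, hP⟩ : ∃ P : ℝ, P = 2 * δ * p ^ 2 := ⟨_, rfl⟩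
  have hself : innerC (xpm d δ p q 1) (xpm d δ p q 1) = ((2 * X + P : ℝ) : ℂ) := by
    rw [innerC_xpm hd hδd, hX, hP]
    ring_nf
  have hcross : innerC (xpm d δ p q 1) (xpm d δ p q (-1)) = (P : ℂ) := by
    rw [innerC_xpm hd hδd, hP]
    ring_nf
  have hnorm : ∑ i, Complex.normSq (xpm d δ p q 1 i) = 2 * X + P := by
    exact_mod_cast (innerC_self _).symm.trans hself
  have h := normSq_innerC_sub_normSq_innerC_le_d1 (xpm d δ p q 1) (xpm d δ p q (-1))
    (xpm d δ p q 1)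
  rw [hself, hcross, hnorm, Complex.normSq_ofReal, Complex.normSq_ofReal] at h
  have hXd : q ^ 2 * d / 4 ≤ X := by
    have : (d : ℝ) ≤ 4 * (d / 2 - δ : ℕ) := by
      have := Nat.even_iff.mp hd
      exact_mod_cast (by omega : d ≤ 4 * (d / 2 - δ))
    rw [hX]
    nlinarith [sq_nonneg q]
  have hP0 : 0 ≤ P := by rw [hP]; positivity
  have hX0 : 0 < X := lt_of_lt_of_le (by have := hp.trans_le hpq; positivity) hXd
  -- `(2X + P)² - P² = 2X (2X + P) + 2XP`
  have : 2 * X * (2 * X + P) ≤ d1 (xpm d δ p q 1) (xpm d δ p q (-1)) * (2 * X + P) := by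
    nlinarith [mul_nonneg hX0.le hP0]
  linarith [le_of_mul_le_mul_right this (by positivity)]

open Finset in
theorem EuclideanSpace.norm_sq_le_card_mul_sq {ι : Type*} [Fintype ι] (y : EuclideanSpace ℝ ι)
    (S : Finset ι) {E : ℝ} (hS : ∀ i ∈ S, |y i| ≤ E) (hy : ∀ i ∉ S, y i = 0) :
    ‖y‖ ^ 2 ≤ #S * E ^ 2 := by
  rw [EuclideanSpace.norm_sq_eq, ← sum_subset (subset_univ S) fun i _ hi => by simp [hy i hi],
    ← nsmul_eq_mul]
  refine sum_le_card_nsmul _ _ _ fun i hi => ?_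
  rw [Real.norm_eq_abs, sq_abs]
  exact sq_le_sq' (abs_le.mp (hS i hi)).1 (abs_le.mp (hS i hi)).2

theorem Ymap_apply {d K : ℕ} (L : ℕ) (m : Fin K → Fin d → ℂ) (a : ℕ) (x : Fin d → ℂ)
    (kl : Fin K × Fin L) :
    Ymap L m a x kl = ‖innerC (shift ((((kl.2 : ℕ) + 1) * a : ℕ) : ℤ) (m kl.1)) x‖ ^ 2 :=
  rfl

open Finset in
theorem norm_Ymap_xpm_sub_sq_mul_le {d δ a L K : ℕ} [NeZero d] (hd : Even d) (hδd : 4 * δ ≤ d)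
    (ha : 0 < a) (haδ : a < δ) (hdaL : d = a * L) {m : Fin K → Fin d → ℂ}
    (hsupp : ∀ k j, m k j ≠ 0 → (j : ℕ) < δ) {M p q : ℝ} (hM : ∀ k j, ‖m k j‖ ≤ M)
    (hM0 : 0 ≤ M) (hp : 0 ≤ p) (hpq : p ≤ q) :
    ‖Ymap L m a (xpm d δ p q 1) - Ymap L m a (xpm d δ p q (-1))‖ ^ 2 * a
      ≤ 4 * δ * K * (4 * p * q * δ ^ 2 * M ^ 2) ^ 2 := by
  set B : Finset (Fin L) := {ℓ | StraddlesFlip d δ (((ℓ + 1) * a) % d)}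
  have hB (ℓ : Fin L) : ℓ ∈ B ↔
      StraddlesFlip d δ (intToFin d (NeZero.pos d) ((((ℓ : ℕ) + 1) * a : ℕ) : ℤ)) := by
    rw [intToFin_natCast_val, mem_filter, and_iff_right (mem_univ ℓ)]
  have hsq := EuclideanSpace.norm_sq_le_card_mul_sq
    (Ymap L m a (xpm d δ p q 1) - Ymap L m a (xpm d δ p q (-1))) (univ ×ˢ B)
    (E := 4 * p * q * δ ^ 2 * M ^ 2)
    (fun kl hkl => by
      rw [PiLp.sub_apply, Ymap_apply, Ymap_apply]
      exact abs_sq_norm_innerC_shift_xpm_sub_le (hsupp kl.1) (hM kl.1) hM0 hp hpq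
        ((hB kl.2).mp (mem_product.mp hkl).2))
    (fun kl hkl => by
      rw [PiLp.sub_apply, Ymap_apply, Ymap_apply, sub_eq_zero,
        norm_innerC_shift_xpm_eq hd hδd (hsupp kl.1) p q
          (fun h => hkl (mem_product.mpr ⟨mem_univ _, (hB kl.2).mpr h⟩))])
  have hcount : (#B * a : ℝ) ≤ 4 * δ := by
    exact_mod_cast card_filter_straddlesFlip_mul_le ha haδ hdaL
  rw [card_product, card_univ, Fintype.card_fin, Nat.cast_mul] at hsq
  calc _ ≤ K * #B * (4 * p * q * δ ^ 2 * M ^ 2) ^ 2 * a := by gcongr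
    _ = K * (#B * a) * (4 * p * q * δ ^ 2 * M ^ 2) ^ 2 := by ring
    _ ≤ K * (4 * δ) * (4 * p * q * δ ^ 2 * M ^ 2) ^ 2 := by gcongr
    _ = _ := by ring

theorem norm_Ymap_xpm_sub_mul_sqrt_le {d δ a L K : ℕ} [NeZero d] (hd : Even d)
    (hδd : 4 * δ ≤ d) (ha : 0 < a) (haδ : a < δ) (hdaL : d = a * L) {m : Fin K → Fin d → ℂ}
    (hsupp : ∀ k j, m k j ≠ 0 → (j : ℕ) < δ) {M p q : ℝ} (hM : ∀ k j, ‖m k j‖ ≤ M)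
    (hM0 : 0 ≤ M) (hp : 0 ≤ p) (hpq : p ≤ q) :
    ‖Ymap L m a (xpm d δ p q 1) - Ymap L m a (xpm d δ p q (-1))‖ * √a
      ≤ 8 * q * (p * √K * M ^ 2 * (δ : ℝ) ^ ((5 : ℝ) / 2)) := by
  have hsq := norm_Ymap_xpm_sub_sq_mul_le hd hδd ha haδ hdaL hsupp hM hM0 hp hpq
  have hq : 0 ≤ q := hp.trans hpq
  have hδ5 : ((δ : ℝ) ^ ((5 : ℝ) / 2)) ^ 2 = (δ : ℝ) ^ 5 := by
    rw [← Real.rpow_natCast, ← Real.rpow_mul (Nat.cast_nonneg _)]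
    norm_num
  refine (pow_le_pow_iff_left₀ (by positivity) (by positivity) two_ne_zero).mp ?_
  simp only [mul_pow, Real.sq_sqrt (Nat.cast_nonneg _), hδ5]
  exact hsq.trans_eq (by ring)

theorem norm_le_maskSup {d K : ℕ} (m : Fin K → Fin d → ℂ) (k : Fin K) (j : Fin d) :
    ‖m k j‖ ≤ maskSup m :=
  (le_ciSup (Set.finite_range _).bddAbove j).trans
    (le_ciSup (f := fun k => ⨆ j, ‖m k j‖) (Set.finite_range _).bddAbove k)

/-- Lower Lipschitz bound for recovery from the `Y`-measurements
with arbitrary locally supported masks. -/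
theorem lower_lipschitz_Y : ∃ C : ℝ, 0 < C ∧
    ∀ (d δ a L K : ℕ) (m : Fin K → Fin d → ℂ) (p q CA : ℝ)
      (A : EuclideanSpace ℝ (Fin K × Fin L) → (Fin d → ℂ)),
      0 < d → Even d → 4 * δ ≤ d → 0 < a → 0 < L → d = a * L → 1 ≤ a → a < δ →
      (∀ k n, m k n ≠ 0 → (n : ℕ) < δ) →
      0 < maskSup m →
      0 < p → p ≤ q →
      (∀ y y', d1 (A y) (A y') ≤ CA * ‖y - y'‖) →
      (∀ x ∈ Cpq d p q, phaseEquiv (A (Ymap L m a x)) x) →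
      C * q * (d : ℝ) * Real.sqrt a /
          (p * Real.sqrt K * maskSup m ^ 2 * (δ : ℝ) ^ ((5 : ℝ) / 2)) ≤ CA := by
  refine ⟨1 / 16, by norm_num, ?_⟩
  intro d δ a L K m p q CA A hd heven hδd ha _ hdaL _ haδ hsupp hM hp hpq hLip hrec
  have : NeZero d := ⟨hd.ne'⟩
  have hq : 0 < q := hp.trans_le hpq
  have hK : 0 < K := Nat.pos_of_ne_zero fun hK => by subst hK; simp [maskSup] at hM
  have hδ : 0 < δ := ha.trans haδ
  set Δ := Ymap L m a (xpm d δ p q 1) - Ymap L m a (xpm d δ p q (-1))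
  set D := p * √K * maskSup m ^ 2 * (δ : ℝ) ^ ((5 : ℝ) / 2)
  have hd1 : q ^ 2 * d / 2 ≤ CA * ‖Δ‖ :=
    calc q ^ 2 * d / 2 ≤ d1 (xpm d δ p q 1) (xpm d δ p q (-1)) :=
          sq_mul_div_two_le_d1_xpm heven hd hδd hp hpq
      _ = d1 (A (Ymap L m a (xpm d δ p q 1))) (A (Ymap L m a (xpm d δ p q (-1)))) :=
          (d1_eq_of_phaseEquiv (hrec _ (xpm_mem_Cpq hp.le hpq (by norm_num)))
            (hrec _ (xpm_mem_Cpq hp.le hpq (by norm_num)))).symm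
      _ ≤ CA * ‖Δ‖ := hLip _ _
  have hΔ : ‖Δ‖ * √a ≤ 8 * q * D :=
    norm_Ymap_xpm_sub_mul_sqrt_le heven hδd ha haδ hdaL hsupp (norm_le_maskSup m) hM.le hp.le hpq
  have hCA : 0 ≤ CA :=
    (pos_of_mul_pos_left ((by positivity : (0 : ℝ) < q ^ 2 * d / 2).trans_le hd1)
      (norm_nonneg _)).le
  have key : q ^ 2 * d / 2 * √a ≤ CA * (8 * q * D) :=
    calc q ^ 2 * d / 2 * √a ≤ CA * ‖Δ‖ * √a := by gcongr
      _ ≤ CA * (8 * q * D) := by rw [mul_assoc]; gcongr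
  rw [div_le_iff₀ (by positivity)]
  nlinarith
end
end

section
/- Let d be an even positive integer and let δ ≤ d/4 be a positive integer. Define x⁺, x⁻ ∈ ℂ^d by x^{±}(n) = 1 for 1 ≤ n ≤ d/2 − δ, x^{±}(n) = 0 for d/2 − δ < n ≤ d/2, x^{±}(n) = ±1 for d/2 < n ≤ d − δ, and x^{±}(n) = 0 for d − δ < n ≤ d. Then: (i) there is no θ ∈ ℝ with x⁺ = e^{iθ}x⁻ (i.e., x⁺ ≁ x⁻); and (ii) for every m ∈ ℂ^d whose nonzero entries all lie in positions {1,…,δ} and every ℓ ∈ ℤ, |⟨S_ℓ m, x⁺⟩| = |⟨S_ℓ m, x⁻⟩|. Consequently Z(x⁺) = Z(x⁻) and Y(x⁺) = Y(x⁻) for any family of such masks and any choice of shifts, so Y and Z are not injective on ℂ^d/∼. -/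
open scoped BigOperators

noncomputable section

/-- The vectors `x^{±}` with unit entries (sign `ε = ±1`): `1` on positions
`1,…,d/2-δ`, `0` on `d/2-δ+1,…,d/2`, `±1` on `d/2+1,…,d-δ`, `0` on `d-δ+1,…,d`. -/
def xpmUnit (d δ : ℕ) (ε : ℝ) : Fin d → ℂ :=
  fun i => if (i : ℕ) < d / 2 - δ then 1
    else if (i : ℕ) < d / 2 then 0
    else if (i : ℕ) < d - δ then ((ε : ℝ) : ℂ)
    else 0

/-! A mask supported on `δ` consecutive positions sees, after any circular shift, a window of `δ`
consecutive positions. The blocks `[0, d/2 - δ)` and `[d/2, d - δ)`, where `x⁺ = x⁻` and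
`x⁺ = -x⁻` respectively, are separated on both sides of the circle by zero gaps of length `δ`,
so the window meets at most one of them. On the window `x⁺ = ±x⁻`, hence the two inner
products agree up to sign. -/

lemma emod_lt_not_both_of_separated {d δ : ℕ} (hd : 0 < d) (ℓ : ℤ) {a b : ℤ}
    (hab : a + δ ≤ b) (hba : b + δ ≤ a + d) (ha : (a + ℓ) % d < δ) : ¬ (b + ℓ) % d < δ := by
  intro hb
  have hd' : (0 : ℤ) < d := by exact_mod_cast hd
  have ha0 := Int.emod_nonneg (a + ℓ) hd'.ne'
  have hb0 := Int.emod_nonneg (b + ℓ) hd'.ne'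
  have hdvd : (d : ℤ) ∣ (b + ℓ) - (a + ℓ) - ((b + ℓ) % d - (a + ℓ) % d) :=
    Int.modEq_iff_dvd.mp ((Int.mod_modEq (b + ℓ) d).sub (Int.mod_modEq (a + ℓ) d))
  have := Int.eq_zero_of_dvd_of_nonneg_of_lt (by omega) (by omega) hdvd
  omega

lemma innerC_congr_support {d : ℕ} {u x y : Fin d → ℂ} (h : ∀ n, u n ≠ 0 → x n = y n) :
    innerC u x = innerC u y :=
  Finset.sum_congr rfl fun n _ => by
    by_cases hn : u n = 0
    · simp [hn]
    · rw [h n hn]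

lemma innerC_const_mul {d : ℕ} (u y : Fin d → ℂ) (c : ℂ) :
    innerC u (fun n => c * y n) = starRingEnd ℂ c * innerC u y := by
  simp only [innerC, Finset.mul_sum, map_mul]
  exact Finset.sum_congr rfl fun n _ => by ring

lemma norm_innerC_eq_of_eq_mul_on_support {d : ℕ} {u x y : Fin d → ℂ} {c : ℂ} (hc : ‖c‖ = 1)
    (h : ∀ n, u n ≠ 0 → x n = c * y n) : ‖innerC u x‖ = ‖innerC u y‖ := by
  rw [innerC_congr_support h, innerC_const_mul, norm_mul, Complex.norm_conj, hc, one_mul]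

lemma Zmap_eq_of_norm_innerC_shift_eq {d K : ℕ} (L a : ℕ) {m : Fin K → Fin d → ℂ}
    {x y : Fin d → ℂ} (h : ∀ k (ℓ : ℤ), ‖innerC (shift ℓ (m k)) x‖ = ‖innerC (shift ℓ (m k)) y‖) :
    Zmap L m a x = Zmap L m a y := by
  ext kl
  exact h kl.1 _

lemma Ymap_eq_of_norm_innerC_shift_eq {d K : ℕ} (L a : ℕ) {m : Fin K → Fin d → ℂ}
    {x y : Fin d → ℂ} (h : ∀ k (ℓ : ℤ), ‖innerC (shift ℓ (m k)) x‖ = ‖innerC (shift ℓ (m k)) y‖) :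
    Ymap L m a x = Ymap L m a y := by
  ext kl
  simp only [Ymap, WithLp.ofLp_toLp, h kl.1]

lemma shift_ne_zero_emod_lt {d δ : ℕ} {m : Fin d → ℂ} (hm : ∀ n, m n ≠ 0 → (n : ℕ) < δ)
    {ℓ : ℤ} {n : Fin d} (h : shift ℓ m n ≠ 0) : ((n : ℤ) + ℓ) % d < δ := by
  have hlt : (((n : ℤ) + ℓ) % d).toNat < δ := hm _ h
  have := Int.emod_nonneg ((n : ℤ) + ℓ) (by exact_mod_cast n.pos.ne' : (d : ℤ) ≠ 0)
  omega

section xpmUnit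

variable {d δ : ℕ}

lemma xpmUnit_one_eq_neg {n : Fin d} (hn : ¬ (n : ℕ) < d / 2 - δ) :
    xpmUnit d δ 1 n = -xpmUnit d δ (-1) n := by
  simp only [xpmUnit, if_neg hn]
  split_ifs <;> simp

lemma xpmUnit_one_eq {n : Fin d} (hn : ¬ (d / 2 ≤ (n : ℕ) ∧ (n : ℕ) < d - δ)) :
    xpmUnit d δ 1 n = xpmUnit d δ (-1) n := by
  simp only [xpmUnit]
  split_ifs <;> first | rfl | omega

lemma exists_xpmUnit_eq_mul_on_support_shift {m : Fin d → ℂ}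
    (hm : ∀ n, m n ≠ 0 → (n : ℕ) < δ) (ℓ : ℤ) :
    ∃ c : ℂ, ‖c‖ = 1 ∧ ∀ n, shift ℓ m n ≠ 0 → xpmUnit d δ 1 n = c * xpmUnit d δ (-1) n := by
  by_cases hC : ∃ b : Fin d, shift ℓ m b ≠ 0 ∧ d / 2 ≤ (b : ℕ) ∧ (b : ℕ) < d - δ
  · obtain ⟨b, hb, hb₁, hb₂⟩ := hC
    refine ⟨-1, by simp, fun n hn => ?_⟩
    rw [neg_one_mul]
    refine xpmUnit_one_eq_neg fun hA => ?_
    exact emod_lt_not_both_of_separated n.pos ℓ (a := n) (b := b) (by omega) (by omega)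
      (shift_ne_zero_emod_lt hm hn) (shift_ne_zero_emod_lt hm hb)
  · refine ⟨1, by simp, fun n hn => ?_⟩
    rw [one_mul]
    exact xpmUnit_one_eq fun h => hC ⟨n, hn, h⟩

lemma norm_innerC_shift_xpmUnit_eq {m : Fin d → ℂ} (hm : ∀ n, m n ≠ 0 → (n : ℕ) < δ) (ℓ : ℤ) :
    ‖innerC (shift ℓ m) (xpmUnit d δ 1)‖ = ‖innerC (shift ℓ m) (xpmUnit d δ (-1))‖ :=
  let ⟨_, hc, h⟩ := exists_xpmUnit_eq_mul_on_support_shift hm ℓ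
  norm_innerC_eq_of_eq_mul_on_support hc h

lemma not_phaseEquiv_xpmUnit (hδ : 0 < δ) (hδd : 4 * δ ≤ d) :
    ¬ phaseEquiv (xpmUnit d δ 1) (xpmUnit d δ (-1)) := by
  rintro ⟨θ, hθ⟩
  have h₀ := congrFun hθ ⟨0, by omega⟩
  have h₁ := congrFun hθ ⟨d / 2, by omega⟩
  simp only [xpmUnit, if_pos (show 0 < d / 2 - δ by omega),
    if_neg (show ¬ d / 2 < d / 2 - δ by omega), lt_irrefl, if_false,
    if_pos (show d / 2 < d - δ by omega)] at h₀ h₁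
  rw [mul_one] at h₀
  rw [← h₀] at h₁
  norm_num at h₁

end xpmUnit

theorem not_injective_general (d δ : ℕ) (hδ : 0 < δ) (hδd : 4 * δ ≤ d) :
    (¬ phaseEquiv (xpmUnit d δ 1) (xpmUnit d δ (-1))) ∧
    (∀ m : Fin d → ℂ, (∀ n, m n ≠ 0 → (n : ℕ) < δ) → ∀ ℓ : ℤ,
      ‖innerC (shift ℓ m) (xpmUnit d δ 1)‖
        = ‖innerC (shift ℓ m) (xpmUnit d δ (-1))‖) ∧
    (∀ (K L a : ℕ) (m : Fin K → Fin d → ℂ), (∀ k n, m k n ≠ 0 → (n : ℕ) < δ) →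
      Zmap L m a (xpmUnit d δ 1) = Zmap L m a (xpmUnit d δ (-1)) ∧
      Ymap L m a (xpmUnit d δ 1) = Ymap L m a (xpmUnit d δ (-1))) := by
  refine ⟨not_phaseEquiv_xpmUnit hδ hδd, fun m hm => norm_innerC_shift_xpmUnit_eq hm,
    fun K L a m hm => ?_⟩
  have h k := norm_innerC_shift_xpmUnit_eq (hm k)
  exact ⟨Zmap_eq_of_norm_innerC_shift_eq L a h, Ymap_eq_of_norm_innerC_shift_eq L a h⟩

/-- The vectors `x⁺ ≁ x⁻`, yet every locally supported mask produces
identical magnitude measurements of them, so `Y` and `Z` are not injective on `ℂ^d/∼`. -/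
theorem not_injective (d δ : ℕ) (hd0 : 0 < d) (hd : Even d) (hδ : 0 < δ) (hδd : 4 * δ ≤ d) :
    (¬ phaseEquiv (xpmUnit d δ 1) (xpmUnit d δ (-1))) ∧
    (∀ m : Fin d → ℂ, (∀ n, m n ≠ 0 → (n : ℕ) < δ) → ∀ ℓ : ℤ,
      ‖innerC (shift ℓ m) (xpmUnit d δ 1)‖
        = ‖innerC (shift ℓ m) (xpmUnit d δ (-1))‖) ∧
    (∀ (K L a : ℕ) (m : Fin K → Fin d → ℂ), (∀ k n, m k n ≠ 0 → (n : ℕ) < δ) →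
      Zmap L m a (xpmUnit d δ 1) = Zmap L m a (xpmUnit d δ (-1)) ∧
      Ymap L m a (xpmUnit d δ 1) = Ymap L m a (xpmUnit d δ (-1))) :=
  not_injective_general d δ hδ hδd
end
end
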